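/- arXiv:2503.06210 — 2 statements merged into one kernel-verified Lean document; each statement's English description precedes it below -/
import Mathlib

section
/- For all real x ≥ 1 and all positive integers q, the sum of 1/n over integers 1 ≤ n ≤ x with gcd(n,q)=1 equals (φ(q)/q)·(log x + Σ_{p | q} (log p)/(p−1) + γ) + O(τ(q)/x), where the implied constant is absolute (independent of q and x). -/
/-!
Möbius inversion over the divisors of `q` turns the sum into
`∑_{d ∣ q} μ(d)/d · H(⌊x/d⌋)`, with `H` the harmonic numbers. Replacing each `H(⌊y⌋)` by
`log y + γ` costs at most `2/y`, i.e. `2/x` per divisor after the weight `1/d`. The resulting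
main term `∑_{d ∣ q} μ(d)/d · (log x + γ - log d)` is evaluated through the Euler product
`∑_{d ∣ q} μ(d) d^{-s} = ∏_{p ∣ q} (1 - p^{-s})`: its value at `s = 1` is `φ(q)/q`, and its
logarithmic derivative at `s = 1` produces `∑_{p ∣ q} log p / (p - 1)`.
-/

open Finset Real UniqueFactorizationMonoid
open scoped ArithmeticFunction.Moebius

theorem sum_divisors_moebius_eq_ite (k : ℕ) :
    ∑ d ∈ k.divisors, μ d = if k = 1 then 1 else 0 := by
  simpa only [ArithmeticFunction.coe_mul_zeta_apply, ArithmeticFunction.one_apply] using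
    congrArg (· k) ArithmeticFunction.moebius_mul_coe_zeta

theorem sum_Icc_filter_dvd {M : Type*} [AddCommMonoid M] (f : ℕ → M) {d : ℕ} (hd : d ≠ 0)
    (N : ℕ) : ∑ n ∈ Icc 1 N with d ∣ n, f n = ∑ m ∈ Icc 1 (N / d), f (d * m) := by
  symm
  refine sum_nbij' (d * ·) (· / d) (fun m hm => ?_) (fun n hn => ?_) (fun m _ => ?_)
    (fun n hn => ?_) fun _ _ => rfl
  · simp only [mem_filter, mem_Icc] at hm ⊢
    refine ⟨⟨Nat.one_le_iff_ne_zero.mpr (mul_ne_zero hd (by omega)), ?_⟩, dvd_mul_right d m⟩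
    rw [mul_comm]
    exact Nat.mul_le_of_le_div d m N hm.2
  · simp only [mem_filter, mem_Icc] at hn ⊢
    exact ⟨Nat.div_pos (Nat.le_of_dvd hn.1.1 hn.2) (Nat.pos_of_ne_zero hd),
      Nat.div_le_div_right hn.1.2⟩
  · simp [hd]
  · exact Nat.mul_div_cancel' (mem_filter.mp hn).2

theorem sum_Icc_coprime_eq_sum_moebius {R : Type*} [CommRing R] (f : ℕ → R) {q : ℕ}
    (hq : q ≠ 0) (N : ℕ) : ∑ n ∈ Icc 1 N with n.Coprime q, f n =
      ∑ d ∈ q.divisors, (μ d : R) * ∑ m ∈ Icc 1 (N / d), f (d * m) := by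
  have hindicator : ∀ n, (if n.Coprime q then f n else 0) =
      ∑ d ∈ q.divisors with d ∣ n, (μ d : R) * f n := by
    intro n
    have hdiv : (n.gcd q).divisors = {d ∈ q.divisors | d ∣ n} := by
      ext d
      simp only [Nat.mem_divisors, Nat.dvd_gcd_iff, mem_filter, ne_eq, hq, not_false_eq_true,
        and_true, Nat.gcd_eq_zero_iff]
      tauto
    rw [← sum_mul, ← hdiv, ← Int.cast_sum, sum_divisors_moebius_eq_ite]
    simp only [Nat.coprime_iff_gcd_eq_one]
    split_ifs <;> simp
  simp_rw [sum_filter, hindicator, sum_filter]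
  rw [sum_comm]
  refine sum_congr rfl fun d hd => ?_
  rw [← sum_filter, ← mul_sum, sum_Icc_filter_dvd _ (Nat.pos_of_mem_divisors hd).ne']

theorem sum_Icc_coprime_one_div {q : ℕ} (hq : q ≠ 0) (N : ℕ) :
    ∑ n ∈ Icc 1 N with n.Coprime q, (1 : ℝ) / n =
      ∑ d ∈ q.divisors, (μ d : ℝ) / d * harmonic (N / d) := by
  rw [sum_Icc_coprime_eq_sum_moebius _ hq]
  refine sum_congr rfl fun d _ => ?_
  simp only [harmonic_eq_sum_Icc, Rat.cast_sum, mul_sum]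
  refine sum_congr rfl fun m _ => ?_
  push_cast
  ring

theorem sum_divisors_moebius_mul_eq_sum_divisors_radical {R : Type*} [Ring R]
    (f : ℕ → R) {n : ℕ} (hn : n ≠ 0) :
    ∑ d ∈ n.divisors, (μ d : R) * f d = ∑ d ∈ (radical n).divisors, (μ d : R) * f d := by
  refine (sum_subset (Nat.divisors_subset_of_dvd hn radical_dvd_self) fun d hd hdr => ?_).symm
  rw [ArithmeticFunction.moebius_eq_zero_of_not_squarefree, Int.cast_zero, zero_mul]
  intro hsq
  obtain ⟨hdn, -⟩ := Nat.mem_divisors.mp hd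
  have hd₀ : d ≠ 0 := ne_zero_of_dvd_ne_zero hn hdn
  exact hdr (Nat.mem_divisors.mpr
    ⟨(hsq.isRadical.dvd_radical hd₀).trans (radical_dvd_radical hdn hn), radical_ne_zero⟩)

theorem ArithmeticFunction.IsMultiplicative.sum_divisors_moebius_mul {R : Type*} [CommRing R]
    {f : ArithmeticFunction R} (hf : f.IsMultiplicative) {n : ℕ} (hn : n ≠ 0) :
    ∑ d ∈ n.divisors, (μ d : R) * f d = ∏ p ∈ n.primeFactors, (1 - f p) := by
  rw [sum_divisors_moebius_mul_eq_sum_divisors_radical f hn, ← Nat.primeFactors_radical,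
    hf.prodPrimeFactors_one_sub_of_squarefree _ squarefree_radical]

theorem sum_divisors_moebius_mul_rpow_neg {n : ℕ} (hn : n ≠ 0) (s : ℝ) :
    ∑ d ∈ n.divisors, (μ d : ℝ) * (d : ℝ) ^ (-s) =
      ∏ p ∈ n.primeFactors, (1 - (p : ℝ) ^ (-s)) := by
  -- an arithmetic function must vanish at `0`, whereas `0 ^ (-s) = 1` for `s = 0`
  let f : ArithmeticFunction ℝ := ⟨fun d => if d = 0 then 0 else (d : ℝ) ^ (-s), if_pos rfl⟩
  have hf : f.IsMultiplicative := by
    refine ⟨by simp [f], fun {m k} _ => ?_⟩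
    rcases eq_or_ne m 0 with rfl | hm
    · simp [f]
    rcases eq_or_ne k 0 with rfl | hk
    · simp [f]
    simp [f, hm, hk, mul_rpow]
  have hfd : ∀ d ≠ 0, f d = (d : ℝ) ^ (-s) := fun d hd => if_neg hd
  convert hf.sum_divisors_moebius_mul hn using 1
  · exact sum_congr rfl fun d hd => by rw [hfd d ((Nat.pos_of_mem_divisors hd).ne')]
  · exact prod_congr rfl fun p hp => by rw [hfd p (Nat.prime_of_mem_primeFactors hp).ne_zero]

theorem totient_div_eq_prod_one_sub_inv (n : ℕ) (hn : n ≠ 0) :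
    (n.totient : ℝ) / n = ∏ p ∈ n.primeFactors, (1 - (p : ℝ)⁻¹) := by
  rw [div_eq_iff (by exact_mod_cast hn), mul_comm]
  simpa using congrArg (Rat.cast : ℚ → ℝ) (Nat.totient_eq_mul_prod_factors n)

theorem sum_divisors_moebius_div {n : ℕ} (hn : n ≠ 0) :
    ∑ d ∈ n.divisors, (μ d : ℝ) / d = n.totient / n := by
  rw [totient_div_eq_prod_one_sub_inv n hn]
  simpa [rpow_neg_one, div_eq_mul_inv] using sum_divisors_moebius_mul_rpow_neg hn 1

theorem hasDerivAt_rpow_neg {a : ℝ} (ha : 0 < a) (s : ℝ) :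
    HasDerivAt (fun t : ℝ => a ^ (-t)) (-(log a * a ^ (-s))) s := by
  simpa using (hasDerivAt_neg s).const_rpow ha

theorem sum_divisors_moebius_div_mul_log {n : ℕ} (hn : n ≠ 0) :
    ∑ d ∈ n.divisors, (μ d : ℝ) / d * log d =
      -((n.totient : ℝ) / n) * ∑ p ∈ n.primeFactors, log p / (p - 1) := by
  -- differentiate `sum_divisors_moebius_mul_rpow_neg` at `s = 1`
  have hpos : ∀ {m : ℕ}, m ≠ 0 → (0 : ℝ) < m := fun hm => by positivity
  have hL : HasDerivAt (fun s : ℝ => ∑ d ∈ n.divisors, (μ d : ℝ) * (d : ℝ) ^ (-s))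
      (∑ d ∈ n.divisors, (μ d : ℝ) * -(log d * (d : ℝ) ^ (-1 : ℝ))) 1 :=
    HasDerivAt.fun_sum fun d hd =>
      (hasDerivAt_rpow_neg (hpos ((Nat.pos_of_mem_divisors hd).ne')) 1).const_mul _
  have hR : HasDerivAt (fun s : ℝ => ∏ p ∈ n.primeFactors, (1 - (p : ℝ) ^ (-s)))
      (∑ p ∈ n.primeFactors, (∏ j ∈ n.primeFactors.erase p, (1 - (j : ℝ) ^ (-1 : ℝ))) •
        -(-(log p * (p : ℝ) ^ (-1 : ℝ)))) 1 :=
    HasDerivAt.fun_finsetProd fun p hp =>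
      (hasDerivAt_rpow_neg (hpos (Nat.prime_of_mem_primeFactors hp).ne_zero) 1).const_sub 1
  have h := hL.unique (by simpa only [sum_divisors_moebius_mul_rpow_neg hn] using hR)
  simp only [rpow_neg_one, smul_eq_mul, neg_neg, mul_neg, sum_neg_distrib] at h
  rw [totient_div_eq_prod_one_sub_inv n hn, neg_mul, mul_sum, ← neg_eq_iff_eq_neg]
  convert h using 1
  · simp only [← sum_neg_distrib]
    exact sum_congr rfl fun d _ => by ring
  · refine sum_congr rfl fun p hp => ?_
    have hp1 : (1 : ℝ) < p := by exact_mod_cast (Nat.prime_of_mem_primeFactors hp).one_lt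
    rw [← prod_erase_mul _ _ hp]
    field_simp [(sub_pos.mpr hp1).ne']

theorem sum_divisors_moebius_div_mul_sub_log {n : ℕ} (hn : n ≠ 0) (c : ℝ) :
    ∑ d ∈ n.divisors, (μ d : ℝ) / d * (c - log d) =
      n.totient / n * (c + ∑ p ∈ n.primeFactors, log p / (p - 1)) := by
  simp only [mul_sub, sum_sub_distrib, ← sum_mul, sum_divisors_moebius_div hn,
    sum_divisors_moebius_div_mul_log hn]
  ring

theorem abs_harmonic_floor_sub_log_le_of_one_le {y : ℝ} (hy : 1 ≤ y) :
    |(harmonic ⌊y⌋₊ : ℝ) - (log y + eulerMascheroniConstant)| ≤ 2 / y := by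
  set M := ⌊y⌋₊
  have hM₁ : 1 ≤ M := Nat.le_floor (by simpa using hy)
  have hM : (1 : ℝ) ≤ M := by exact_mod_cast hM₁
  have hMy : (M : ℝ) ≤ y := Nat.floor_le (by linarith)
  have hyM : y < M + 1 := Nat.lt_floor_add_one y
  have hlower : (harmonic M : ℝ) - log (M + 1) < eulerMascheroniConstant := by
    simpa [eulerMascheroniSeq] using eulerMascheroniSeq_lt_eulerMascheroniConstant M
  have hupper : eulerMascheroniConstant < harmonic M - log M := by
    have h := eulerMascheroniConstant_lt_eulerMascheroniSeq' M
    rwa [eulerMascheroniSeq', if_neg (by omega)] at h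
  have hlogM : log M ≤ log y := log_le_log (by linarith) hMy
  have hlogy : log y ≤ log (M + 1) := log_le_log (by linarith) hyM.le
  have hgap : log (M + 1) ≤ log M + 1 / M := by
    have h := log_le_sub_one_of_pos (x := (M + 1) / M) (by positivity)
    rw [log_div (by positivity) (by positivity), add_div, div_self (by positivity)] at h
    linarith
  have hMy' : 1 / (M : ℝ) ≤ 2 / y := by
    rw [div_le_div_iff₀ (by positivity) (by positivity)]
    linarith
  rw [abs_le]
  constructor <;> linarith

theorem abs_harmonic_floor_sub_log_le_of_lt_one {y : ℝ} (hy₀ : 0 < y) (hy : y < 1) :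
    |(harmonic ⌊y⌋₊ : ℝ) - (log y + eulerMascheroniConstant)| ≤ 1 / y := by
  rw [Nat.floor_eq_zero.mpr hy, harmonic_zero, Rat.cast_zero, zero_sub, abs_neg, abs_le]
  have hlog : -log y ≤ 1 / y - 1 := by
    simpa [one_div, log_inv] using log_le_sub_one_of_pos (inv_pos.mpr hy₀)
  have hy' : 1 < 1 / y := by rw [lt_div_iff₀ hy₀]; linarith
  have hγ₀ := one_half_lt_eulerMascheroniConstant
  have hγ₁ := eulerMascheroniConstant_lt_two_thirds
  constructor <;> linarith [log_nonpos hy₀.le hy.le]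

theorem abs_harmonic_floor_sub_log_le {y : ℝ} (hy : 0 < y) :
    |(harmonic ⌊y⌋₊ : ℝ) - (log y + eulerMascheroniConstant)| ≤ 2 / y := by
  rcases lt_or_ge y 1 with hy₁ | hy₁
  · exact (abs_harmonic_floor_sub_log_le_of_lt_one hy hy₁).trans
      (div_le_div_of_nonneg_right one_le_two hy.le)
  · exact abs_harmonic_floor_sub_log_le_of_one_le hy₁

theorem abs_harmonic_floor_div_sub_le {x : ℝ} (hx : 0 < x) {d : ℕ} (hd : d ≠ 0) :
    |(harmonic (⌊x⌋₊ / d) : ℝ) - (log x + eulerMascheroniConstant - log d)| ≤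
      2 * d / x := by
  have hd₀ : (0 : ℝ) < d := by exact_mod_cast Nat.pos_of_ne_zero hd
  rw [← Nat.floor_div_natCast, add_sub_right_comm, ← log_div hx.ne' hd₀.ne',
    ← div_div_eq_mul_div]
  exact abs_harmonic_floor_sub_log_le (div_pos hx hd₀)

theorem stmt_0 : ∃ C : ℝ, 0 < C ∧ ∀ (q : ℕ) (x : ℝ), 0 < q → 1 ≤ x →
    |(∑ n ∈ (Finset.Icc 1 ⌊x⌋₊).filter (fun n => Nat.gcd n q = 1), (1 : ℝ) / n) -
      ((Nat.totient q : ℝ) / q) *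
        (Real.log x + (∑ p ∈ q.primeFactors, Real.log p / (p - 1)) +
          Real.eulerMascheroniConstant)| ≤ C * ((q.divisors.card : ℝ) / x) := by
  refine ⟨2, two_pos, fun q x hq hx => ?_⟩
  have hx₀ : 0 < x := by linarith
  have hterm : ∀ d ∈ q.divisors, |(μ d : ℝ) / d * harmonic (⌊x⌋₊ / d) -
      (μ d : ℝ) / d * (log x + eulerMascheroniConstant - log d)| ≤ 2 / x := by
    intro d hd
    have hd₀ : d ≠ 0 := (Nat.pos_of_mem_divisors hd).ne'
    have hμ : |(μ d : ℝ)| ≤ 1 := by exact_mod_cast ArithmeticFunction.abs_moebius_le_one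
    rw [← mul_sub, abs_mul, abs_div, Nat.abs_cast]
    calc |(μ d : ℝ)| / d *
          |(harmonic (⌊x⌋₊ / d) : ℝ) - (log x + eulerMascheroniConstant - log d)|
        ≤ 1 / d * (2 * d / x) := by
          gcongr
          exact abs_harmonic_floor_div_sub_le hx₀ hd₀
      _ = 2 / x := by field_simp
  simp only [← Nat.coprime_iff_gcd_eq_one]
  rw [sum_Icc_coprime_one_div hq.ne', add_right_comm,
    ← sum_divisors_moebius_div_mul_sub_log hq.ne', ← sum_sub_distrib]
  calc _ ≤ ∑ d ∈ q.divisors, |(μ d : ℝ) / d * harmonic (⌊x⌋₊ / d) -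
        (μ d : ℝ) / d * (log x + eulerMascheroniConstant - log d)| := abs_sum_le_sum_abs _ _
    _ ≤ ∑ _d ∈ q.divisors, 2 / x := sum_le_sum hterm
    _ = 2 * ((q.divisors.card : ℝ) / x) := by rw [sum_const, nsmul_eq_mul]; ring
end

section
/- There is an absolute constant C such that for all real t ≥ 2, |Σ_{p ≤ t} (log p)/(p−1) − log t| ≤ C, the sum being over primes p ≤ t (a form of Mertens' second theorem). -/
/-!
Legendre's formula writes `log n! = ∑_{p ≤ n} v_p(n!) log p` with `n/p - 1 ≤ v_p(n!) ≤ n/(p-1)`.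
Against `n log n - n ≤ log n! ≤ n log n`, the upper bound on `v_p(n!)` gives
`∑_{p ≤ n} log p/(p-1) ≥ log n - 1`, and the lower one, with Chebyshev's `θ(n) ≤ n log 4`, gives
`∑_{p ≤ n} log p/p ≤ log n + log 4`. The two sums differ by `∑ log p/(p(p-1))`, which converges.
-/

open Finset Real
open scoped Nat
open Nat (primesLE)

theorem filter_prime_Iic_eq_primesLE (n : ℕ) : (Iic n).filter Nat.Prime = primesLE n := by
  ext; simp [Nat.primesLE_eq_filter_range]

theorem factorization_factorial_le_div_sub_one {p : ℕ} (hp : p.Prime) (n : ℕ) :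
    ((n !).factorization p : ℝ) ≤ n / (p - 1) := by
  have key : ((p - 1 : ℕ) : ℝ) * (n !).factorization p ≤ n := by
    exact_mod_cast (Nat.sub_one_mul_factorization_factorial hp).trans_le (Nat.sub_le _ _)
  rw [Nat.cast_sub hp.one_le, Nat.cast_one] at key
  have hp1 : (1 : ℝ) < p := by exact_mod_cast hp.one_lt
  rw [le_div_iff₀ (by linarith)]
  linarith

theorem div_sub_one_le_factorization_factorial {p : ℕ} (hp : p.Prime) (n : ℕ) :
    (n : ℝ) / p - 1 ≤ (n !).factorization p := by
  have key : n / p ≤ (n !).factorization p := by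
    rw [Nat.factorization_factorial hp (b := n + 2) (by have := Nat.log_le_self p n; omega)]
    simpa using single_le_sum (f := fun i => n / p ^ i) (fun _ _ => Nat.zero_le _)
      (show 1 ∈ Ico 1 (n + 2) by simp)
  calc (n : ℝ) / p - 1 ≤ ⌊(n : ℝ) / p⌋₊ := (Nat.sub_one_lt_floor _).le
    _ = (n / p : ℕ) := by rw [Nat.floor_div_eq_div]
    _ ≤ _ := by exact_mod_cast key

theorem log_factorial_eq_sum_primesLE (n : ℕ) :
    log (n ! : ℕ) = ∑ p ∈ primesLE n, (n !).factorization p * log p := by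
  rw [log_nat_eq_sum_factorization]
  refine Finsupp.sum_of_support_subset _ (fun p hp => ?_) _ (fun _ _ => by simp)
  have hp' := Nat.prime_of_mem_primeFactors hp
  rw [Nat.primesLE_eq_filter_range, mem_filter, mem_range, Nat.lt_succ_iff]
  exact ⟨hp'.dvd_factorial.mp (Nat.dvd_of_mem_primeFactors hp), hp'⟩

theorem log_sub_one_le_sum_primesLE_log_div_sub_one {n : ℕ} (hn : n ≠ 0) :
    log n - 1 ≤ ∑ p ∈ primesLE n, log p / (p - 1) := by
  have hn0 : (0 : ℝ) < n := by positivity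
  have h := calc
    n * log n - n ≤ log (n ! : ℕ) := by
      have := Stirling.le_log_factorial_stirling hn
      have : 0 ≤ log n := log_natCast_nonneg n
      have : 0 ≤ log (2 * π) := log_nonneg (by linarith [pi_gt_three])
      linarith
    _ = ∑ p ∈ primesLE n, (n !).factorization p * log p := log_factorial_eq_sum_primesLE n
    _ ≤ ∑ p ∈ primesLE n, n / (p - 1) * log p := by
      refine sum_le_sum fun p hp => ?_
      have hp := (Nat.mem_primesLE.mp hp).2
      exact mul_le_mul_of_nonneg_right (factorization_factorial_le_div_sub_one hp n)
        (log_natCast_nonneg p)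
    _ = n * ∑ p ∈ primesLE n, log p / (p - 1) := by
      rw [mul_sum]; exact sum_congr rfl fun _ _ => by ring
  rw [← mul_le_mul_iff_right₀ hn0]
  linarith

theorem sum_primesLE_log_div_le {n : ℕ} (hn : n ≠ 0) :
    ∑ p ∈ primesLE n, log p / p ≤ log n + log 4 := by
  have hn0 : (0 : ℝ) < n := by positivity
  have h := calc
    n * ∑ p ∈ primesLE n, log p / p - Chebyshev.theta n
        = ∑ p ∈ primesLE n, (n / p - 1) * log p := by
      rw [Chebyshev.theta_eq_sum_primesLE_log, mul_sum, ← sum_sub_distrib]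
      exact sum_congr rfl fun _ _ => by ring
    _ ≤ ∑ p ∈ primesLE n, (n !).factorization p * log p := by
      refine sum_le_sum fun p hp => ?_
      have hp := (Nat.mem_primesLE.mp hp).2
      exact mul_le_mul_of_nonneg_right (div_sub_one_le_factorization_factorial hp n)
        (log_natCast_nonneg p)
    _ = log (n ! : ℕ) := (log_factorial_eq_sum_primesLE n).symm
    _ ≤ n * log n := by
      rw [← log_pow, ← Nat.cast_pow]
      exact log_le_log (by positivity) (by exact_mod_cast Nat.factorial_le_pow n)
  have := Chebyshev.theta_le_log4_mul_x hn0.le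
  rw [← mul_le_mul_iff_right₀ hn0]
  linarith

theorem log_div_mul_sub_one_le {x : ℝ} (hx : 2 ≤ x) :
    log x / (x * (x - 1)) ≤ 4 * (x ^ (3 / 2 : ℝ))⁻¹ := by
  set s := x ^ (1 / 2 : ℝ) with hs
  have hs0 : 0 < s := by positivity
  have hss : s * s = x := by rw [← rpow_add (by linarith)]; norm_num
  have hlog : log x ≤ 2 * s := by
    have := log_le_rpow_div (x := x) (by linarith) (by norm_num : (0 : ℝ) < 1 / 2)
    rw [← hs] at this; linarith
  have h32 : x ^ (3 / 2 : ℝ) = x * s := by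
    rw [hs, ← rpow_one_add' (by linarith) (by norm_num)]; norm_num
  have hx0 : x ≠ 0 := by linarith
  rw [h32, div_le_iff₀ (by nlinarith), show 4 * (x * s)⁻¹ * (x * (x - 1)) = 4 * (x - 1) / s by
    field_simp, le_div_iff₀ hs0]
  nlinarith [mul_le_mul_of_nonneg_right hlog hs0.le]

theorem log_div_mul_sub_one_nonneg (n : ℕ) : 0 ≤ log n / (n * (n - 1 : ℝ)) := by
  rcases lt_or_ge n 2 with hn | hn
  · interval_cases n <;> simp
  · have : (2 : ℝ) ≤ n := by exact_mod_cast hn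
    exact div_nonneg (log_natCast_nonneg n) (by nlinarith)

theorem summable_log_div_mul_sub_one : Summable fun n : ℕ => log n / (n * (n - 1 : ℝ)) := by
  refine Summable.of_nonneg_of_le log_div_mul_sub_one_nonneg (fun n => ?_)
    ((summable_nat_rpow_inv.mpr (by norm_num : (1 : ℝ) < 3 / 2)).mul_left 4)
  rcases lt_or_ge n 2 with hn | hn
  · interval_cases n <;> simp
  · exact log_div_mul_sub_one_le (by exact_mod_cast hn)

theorem sum_primesLE_log_div_sub_one_le {n : ℕ} (hn : n ≠ 0) :
    ∑ p ∈ primesLE n, log p / (p - 1)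
      ≤ log n + log 4 + ∑' m : ℕ, log m / (m * (m - 1 : ℝ)) := by
  have hsplit : ∑ p ∈ primesLE n, log p / (p - 1)
      = ∑ p ∈ primesLE n, log p / p + ∑ p ∈ primesLE n, log p / (p * (p - 1)) := by
    rw [← sum_add_distrib]
    refine sum_congr rfl fun p hp => ?_
    have hp : (2 : ℝ) ≤ p := by exact_mod_cast (Nat.mem_primesLE.mp hp).2.two_le
    have : (p : ℝ) - 1 ≠ 0 := by linarith
    field_simp
    ring
  have htail := summable_log_div_mul_sub_one.sum_le_tsum (primesLE n) fun m _ =>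
    log_div_mul_sub_one_nonneg m
  linarith [sum_primesLE_log_div_le hn]

/-- a form of Mertens' second theorem. -/
theorem stmt_18 : ∃ C : ℝ, ∀ t : ℝ, 2 ≤ t →
    |(∑ p ∈ (Finset.Iic ⌊t⌋₊).filter Nat.Prime, Real.log p / (p - 1)) - Real.log t|
      ≤ C := by
  refine ⟨log 4 + (∑' m : ℕ, log m / (m * (m - 1 : ℝ))) + log 2 + 1, fun t ht => ?_⟩
  rw [filter_prime_Iic_eq_primesLE]
  set n := ⌊t⌋₊
  have hn : n ≠ 0 := (Nat.floor_pos.mpr (by linarith)).ne'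
  have hn1 : (1 : ℝ) ≤ n := by exact_mod_cast Nat.one_le_iff_ne_zero.mpr hn
  have hlog_floor_le : log n ≤ log t := log_le_log (by linarith) (Nat.floor_le (by linarith))
  have hlog_le : log t ≤ log n + log 2 := by
    rw [← log_mul (by linarith) two_ne_zero]
    exact log_le_log (by linarith) (by linarith [Nat.lt_floor_add_one t])
  have hC : 0 ≤ log 4 + ∑' m : ℕ, log m / (m * (m - 1 : ℝ)) :=
    add_nonneg (log_nonneg (by norm_num)) (tsum_nonneg log_div_mul_sub_one_nonneg)
  have := log_sub_one_le_sum_primesLE_log_div_sub_one hn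
  have := sum_primesLE_log_div_sub_one_le hn
  rw [abs_sub_le_iff]
  constructor <;> linarith [log_nonneg one_le_two]
end
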